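/- There exists a universal constant c_rep > 0 such that the following holds. Let E ⊂ ℝ² be finite and let Q be a square with side length δ_Q ≤ 1. Suppose that, after rotating coordinates by some angle ω, the set E ∩ Q* is contained in the graph {(s, φ(s)) : s ∈ ℝ} of a twice continuously differentiable function φ : ℝ → ℝ with |φ′| ≤ 1 on ℝ. Then there exists a point x_Q^♯ ∈ Q with dist(x_Q^♯, E) ≥ c_rep·δ_Q. -/
import Mathlib


noncomputable section

/-- The plane `ℝ²` with the Euclidean metric. -/
abbrev V2 : Type := EuclideanSpace ℝ (Fin 2)

/-- A (half-open) axis-parallel square `[s, s+len) × [t, t+len)` in `ℝ²`. -/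
structure Sq where
  s : ℝ
  t : ℝ
  len : ℝ

/-- The square `Q` itself, as a subset of `ℝ²`. -/
def Sq.carrier (Q : Sq) : Set V2 :=
  {p : V2 | Q.s ≤ p 0 ∧ p 0 < Q.s + Q.len ∧ Q.t ≤ p 1 ∧ p 1 < Q.t + Q.len}

/-- `Q* := 2Q`, the concentric double of `Q`. -/
def Sq.double (Q : Sq) : Set V2 :=
  {p : V2 | Q.s - Q.len / 2 ≤ p 0 ∧ p 0 < Q.s + 3 * Q.len / 2 ∧
            Q.t - Q.len / 2 ≤ p 1 ∧ p 1 < Q.t + 3 * Q.len / 2}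

/-- The point of `ℝ²` with coordinates `(s, t)` in the coordinate system rotated
counterclockwise by the angle `ω`, i.e. `R_ω (s, t)` where `R_ω` is the rotation by `ω`
about the origin. -/
noncomputable def rot (ω s t : ℝ) : V2 :=
  (WithLp.equiv 2 (Fin 2 → ℝ)).symm
    ![s * Real.cos ω - t * Real.sin ω, s * Real.sin ω + t * Real.cos ω]

lemma rot_apply0 (ω s t : ℝ) : rot ω s t 0 = s * Real.cos ω - t * Real.sin ω := rfl

lemma rot_apply1 (ω s t : ℝ) : rot ω s t 1 = s * Real.sin ω + t * Real.cos ω := rfl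

lemma coord_le_dist (x y : V2) (i : Fin 2) : |x i - y i| ≤ dist x y := by
  rw [EuclideanSpace.dist_eq]
  have h1 : dist (x i) (y i) ^ 2 ≤ ∑ j, dist (x j) (y j) ^ 2 :=
    Finset.single_le_sum (f := fun j => dist (x j) (y j) ^ 2) (fun j _ => sq_nonneg _) (Finset.mem_univ i)
  calc |x i - y i| = Real.sqrt (dist (x i) (y i) ^ 2) := by
        rw [Real.sqrt_sq_eq_abs, Real.dist_eq, abs_abs]
    _ ≤ _ := Real.sqrt_le_sqrt h1

lemma dist_rot (ω s t s' t' : ℝ) :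
    dist (rot ω s t) (rot ω s' t') = Real.sqrt ((s - s') ^ 2 + (t - t') ^ 2) := by
  rw [EuclideanSpace.dist_eq, Fin.sum_univ_two, rot_apply0, rot_apply1, rot_apply0,
    rot_apply1, Real.dist_eq, Real.dist_eq, sq_abs, sq_abs]
  congr 1
  linear_combination ((s - s') ^ 2 + (t - t') ^ 2) * Real.sin_sq_add_cos_sq ω

set_option maxHeartbeats 1600000 in
/-- **Lemma 5.6 (representative point).** There is a universal constant `c_rep > 0` such
that: if, in some rotated coordinate system, `E ∩ Q*` lies on the graph of a `C²`
function `φ` with `|φ′| ≤ 1`, then there is a point `x_Q^♯ ∈ Q` whose distance to every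
point of `E` is at least `c_rep·δ_Q`. -/
theorem representative_point_exists :
    ∃ crep : ℝ, 0 < crep ∧
      ∀ (E : Finset V2) (Q : Sq) (ω : ℝ) (φ : ℝ → ℝ),
        0 < Q.len → Q.len ≤ 1 →
        ContDiff ℝ 2 φ → (∀ s : ℝ, |deriv φ s| ≤ 1) →
        (∀ x ∈ E, (x : V2) ∈ Q.double → ∃ s : ℝ, (x : V2) = rot ω s (φ s)) →
        ∃ xr ∈ Q.carrier, ∀ y ∈ E, crep * Q.len ≤ dist xr y := by
  refine ⟨1/16, by norm_num, ?_⟩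
  intro E Q ω φ hlen hlen1 hφ hφ' hE
  set δ := Q.len with hδ
  have hlip : ∀ u v : ℝ, |φ u - φ v| ≤ |u - v| := by
    intro u v
    have hd : ∀ x ∈ (Set.univ : Set ℝ), DifferentiableWithinAt ℝ φ Set.univ x := fun x _ =>
      (hφ.differentiable (by norm_num)).differentiableAt.differentiableWithinAt
    have hb : ∀ x ∈ (Set.univ : Set ℝ), ‖derivWithin φ Set.univ x‖ ≤ 1 := by
      intro x _
      rw [derivWithin_univ]
      exact hφ' x
    have := Convex.norm_image_sub_le_of_norm_derivWithin_le hd hb convex_univ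
      (Set.mem_univ v) (Set.mem_univ u)
    simpa using this
  set c0 : ℝ := Q.s + δ / 2 with hc0
  set c1 : ℝ := Q.t + δ / 2 with hc1
  set a : ℝ := c0 * Real.cos ω + c1 * Real.sin ω with ha
  set b : ℝ := -c0 * Real.sin ω + c1 * Real.cos ω with hb
  have hcenter0 : a * Real.cos ω - b * Real.sin ω = c0 := by
    rw [ha, hb]; linear_combination c0 * Real.sin_sq_add_cos_sq ω
  have hcenter1 : a * Real.sin ω + b * Real.cos ω = c1 := by
    rw [ha, hb]; linear_combination c1 * Real.sin_sq_add_cos_sq ω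
  set t' : ℝ := if φ a ≤ b then b + δ / 8 else b - δ / 8 with ht'def
  have ht'b : |t' - b| ≤ δ / 8 := by
    rw [ht'def]; split
    · rw [show b + δ / 8 - b = δ / 8 by ring, abs_of_nonneg (by linarith)]
    · rw [show b - δ / 8 - b = -(δ / 8) by ring, abs_neg, abs_of_nonneg (by linarith)]
  have ht'φ : δ / 8 ≤ |t' - φ a| := by
    rw [ht'def]; split
    · rw [abs_of_nonneg (by linarith)]; linarith
    · rw [abs_of_nonpos (by linarith)]; linarith
  set xr : V2 := rot ω a t' with hxr
  have hsb1 : Real.sin ω ≤ 1 := Real.sin_le_one ω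
  have hsb2 : -1 ≤ Real.sin ω := Real.neg_one_le_sin ω
  have hcb1 : Real.cos ω ≤ 1 := Real.cos_le_one ω
  have hcb2 : -1 ≤ Real.cos ω := Real.neg_one_le_cos ω
  have hx0 : |xr 0 - c0| ≤ δ / 8 := by
    rw [hxr, rot_apply0]
    have : a * Real.cos ω - t' * Real.sin ω - c0 = -((t' - b) * Real.sin ω) := by
      rw [← hcenter0]; ring
    rw [this, abs_neg, abs_mul]
    calc |t' - b| * |Real.sin ω| ≤ (δ/8) * 1 := by
          apply mul_le_mul ht'b (abs_le.mpr ⟨hsb2, hsb1⟩) (abs_nonneg _) (by linarith)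
      _ = δ / 8 := by ring
  have hx1 : |xr 1 - c1| ≤ δ / 8 := by
    rw [hxr, rot_apply1]
    have : a * Real.sin ω + t' * Real.cos ω - c1 = (t' - b) * Real.cos ω := by
      rw [← hcenter1]; ring
    rw [this, abs_mul]
    calc |t' - b| * |Real.cos ω| ≤ (δ/8) * 1 := by
          apply mul_le_mul ht'b (abs_le.mpr ⟨hcb2, hcb1⟩) (abs_nonneg _) (by linarith)
      _ = δ / 8 := by ring
  rw [abs_le] at hx0 hx1
  have hmem2 : True := trivial
  have hmem : xr ∈ Q.carrier := by
    obtain ⟨l0, r0⟩ := hx0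
    obtain ⟨l1, r1⟩ := hx1
    exact ⟨by rw [hc0] at l0; linarith, by rw [hc0] at r0; linarith,
      by rw [hc1] at l1; linarith, by rw [hc1] at r1; linarith⟩
  refine ⟨xr, hmem, ?_⟩
  intro y hy
  by_cases hyd : y ∈ Q.double
  · obtain ⟨u, hu⟩ := hE y hy hyd
    rw [hu, hxr, dist_rot]
    have key : δ / 8 - |a - u| ≤ |t' - φ u| := by
      have h1 := hlip a u
      have h2 := abs_sub_abs_le_abs_sub (t' - φ a) (φ u - φ a)
      have h3 : |t' - φ a - (φ u - φ a)| = |t' - φ u| := by ring_nf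
      calc δ / 8 - |a - u| ≤ |t' - φ a| - |φ u - φ a| := by
            have : |φ u - φ a| ≤ |a - u| := by rw [abs_sub_comm a u]; exact hlip u a
            linarith
        _ ≤ |t' - φ a - (φ u - φ a)| := h2
        _ = |t' - φ u| := h3
    by_cases hcase : δ / 16 ≤ |a - u|
    · calc (1:ℝ)/16 * δ ≤ |a - u| := by linarith
        _ = Real.sqrt ((a - u)^2) := (Real.sqrt_sq_eq_abs _).symm
        _ ≤ _ := Real.sqrt_le_sqrt (by nlinarith [sq_nonneg (t' - φ u)])
    · push_neg at hcase
      have h4 : δ / 16 ≤ |t' - φ u| := by linarith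
      calc (1:ℝ)/16 * δ ≤ |t' - φ u| := by linarith
        _ = Real.sqrt ((t' - φ u)^2) := (Real.sqrt_sq_eq_abs _).symm
        _ ≤ _ := Real.sqrt_le_sqrt (by nlinarith [sq_nonneg (a - u)])
  · have hmem' := hmem
    obtain ⟨m0, m1, m2, m3⟩ := hmem'
    clear_value xr
    have hfar : δ / 2 ≤ dist xr y := by
      simp only [Sq.double, Set.mem_setOf_eq] at hyd
      push_neg at hyd
      by_cases h0 : Q.s - δ / 2 ≤ y 0
      · by_cases h1 : y 0 < Q.s + 3 * δ / 2
        · by_cases h2 : Q.t - δ / 2 ≤ y 1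
          · have h3 := hyd h0 h1 h2
            calc δ / 2 ≤ y 1 - xr 1 := by linarith
              _ ≤ |xr 1 - y 1| := by rw [abs_sub_comm]; exact le_abs_self _
              _ ≤ _ := coord_le_dist _ _ _
          · push_neg at h2
            calc δ / 2 ≤ xr 1 - y 1 := by linarith
              _ ≤ |xr 1 - y 1| := le_abs_self _
              _ ≤ _ := coord_le_dist _ _ _
        · push_neg at h1
          calc δ / 2 ≤ y 0 - xr 0 := by linarith
            _ ≤ |xr 0 - y 0| := by rw [abs_sub_comm]; exact le_abs_self _
            _ ≤ _ := coord_le_dist _ _ _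
      · push_neg at h0
        calc δ / 2 ≤ xr 0 - y 0 := by linarith
          _ ≤ |xr 0 - y 0| := le_abs_self _
          _ ≤ _ := coord_le_dist _ _ _
    linarith
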